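/- Theorem B(2): If an n-by-n real matrix A is TP_{k+3} for some k ≥ 1, then D_k(A) is TP_3. -/

import Mathlib

open Matrix

open Matrix

/-- `A` is totally positive: every minor (with strictly increasing row and
column index selections) is positive. -/
def IsTP {α β : Type} [LinearOrder α] [LinearOrder β] (A : Matrix α β ℝ) : Prop :=
  ∀ (l : ℕ) (r : Fin l → α) (c : Fin l → β), StrictMono r → StrictMono c →
    0 < (A.submatrix r c).det

/-- `A` is `TP_k`: every minor of order at most `k` is positive. -/
def IsTPk {α β : Type} [LinearOrder α] [LinearOrder β] (A : Matrix α β ℝ) (k : ℕ) : Prop :=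
  ∀ (l : ℕ), l ≤ k → ∀ (r : Fin l → α) (c : Fin l → β), StrictMono r → StrictMono c →
    0 < (A.submatrix r c).det

/-- `k`-subsets of `{1,…,n}`, encoded as strictly increasing tuples. -/
abbrev STuple (n k : ℕ) : Type := {f : Fin k → Fin n // StrictMono f}

noncomputable instance lexPi {n k : ℕ} : LinearOrder (Lex (Fin k → Fin n)) :=
  @Pi.Lex.linearOrder (Fin k) (fun _ => Fin n) _
    Finite.to_wellFoundedLT _

/-- The lexicographic linear order on `k`-subsets. -/
noncomputable instance {n k : ℕ} : LinearOrder (STuple n k) :=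
  LinearOrder.lift' (fun s => toLex s.1) (fun _ _ h => Subtype.ext (congrArg ofLex h))

/-- The `k`-th compound matrix of `A`: the matrix of all `k×k` minors of `A`,
rows and columns indexed by `k`-subsets ordered lexicographically. -/
noncomputable def compound {n : ℕ} (A : Matrix (Fin n) (Fin n) ℝ) (k : ℕ) :
    Matrix (STuple n k) (STuple n k) ℝ :=
  fun s t => (A.submatrix s.1 t.1).det

/-- The `k`-th Dodgson condensation matrix of `A`: the `(n-k) × (n-k)` matrix of
contiguous minors of order `k+1` (0-indexed positions). -/
noncomputable def Dmat {n : ℕ} (A : Matrix (Fin n) (Fin n) ℝ) (k : ℕ) :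
    Matrix (Fin (n - k)) (Fin (n - k)) ℝ :=
  fun i j =>
    (A.submatrix
      (fun p : Fin (k + 1) => (⟨i.1 + p.1, by have := i.2; have := p.2; omega⟩ : Fin n))
      (fun p : Fin (k + 1) => (⟨j.1 + p.1, by have := j.2; have := p.2; omega⟩ : Fin n))).det

/-- The contiguous minor of `A` of order `sz` with top-left position `(i, j)`
(0-indexed): `det A[{i,…,i+sz-1},{j,…,j+sz-1}]`. -/
noncomputable def cminor {n : ℕ} (A : Matrix (Fin n) (Fin n) ℝ) (sz i j : ℕ)
    (hi : i + sz ≤ n) (hj : j + sz ≤ n) : ℝ :=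
  (A.submatrix (fun p : Fin sz => (⟨i + p.1, by have := p.2; omega⟩ : Fin n))
               (fun p : Fin sz => (⟨j + p.1, by have := p.2; omega⟩ : Fin n))).det

/-!
By the Desnanot–Jacobi identity, the adjacent `2 × 2` minor of `D_k(A)` at `(i, j)` is
`D_{k+1}(A)_{i,j} · D_{k-1}(A)_{i+1,j+1}`, so it is positive whenever `A` is `TP_{k+2}`. Applying
the identity once more (to a `3 × 3` array), an adjacent `3 × 3` minor of `D_k(A)`, multiplied by the
positive central entry, becomes a `2 × 2` minor of the entrywise product of `D_{k+1}(A)` and a shift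
of `D_{k-1}(A)`; both factors have positive entries and positive adjacent `2 × 2` minors, hence so
does their product. This only involves contiguous minors of `A` of order at most `k + 3`.

Fekete's criterion then upgrades positivity of the adjacent minors of order `≤ 3` of `D_k(A)` to
positivity of all its minors of order `≤ 3`: a minor whose rows have a gap is written, through a
three-term identity obtained by inserting a row `t` into the gap, as a positive combination of minors
with smaller spread, and likewise for columns.
-/

section Minors

variable {R : Type*} [CommRing R]

def minor2 (f : ℕ → ℕ → R) (i₁ i₂ j₁ j₂ : ℕ) : R :=
  f i₁ j₁ * f i₂ j₂ - f i₁ j₂ * f i₂ j₁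

def minor3 (f : ℕ → ℕ → R) (i₁ i₂ i₃ j₁ j₂ j₃ : ℕ) : R :=
  f i₁ j₁ * minor2 f i₂ i₃ j₂ j₃ - f i₁ j₂ * minor2 f i₂ i₃ j₁ j₃ + f i₁ j₃ * minor2 f i₂ i₃ j₁ j₂

theorem minor2_swap (f : ℕ → ℕ → R) (i₁ i₂ j₁ j₂ : ℕ) :
    minor2 (Function.swap f) i₁ i₂ j₁ j₂ = minor2 f j₁ j₂ i₁ i₂ := by
  simp only [minor2, Function.swap]; ring

theorem minor3_swap (f : ℕ → ℕ → R) (i₁ i₂ i₃ j₁ j₂ j₃ : ℕ) :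
    minor3 (Function.swap f) i₁ i₂ i₃ j₁ j₂ j₃ = minor3 f j₁ j₂ j₃ i₁ i₂ i₃ := by
  simp only [minor3, minor2, Function.swap]; ring

theorem minor3_desnanot_jacobi (f : ℕ → ℕ → R) (a b c p q r : ℕ) :
    minor3 f a b c p q r * f b q =
      minor2 f a b p q * minor2 f b c q r - minor2 f a b q r * minor2 f b c p q := by
  simp only [minor3, minor2]; ring

end Minors

theorem minor2_mul_pos {g h : ℕ → ℕ → ℝ} {i₁ i₂ j₁ j₂ : ℕ}
    (hg : 0 < minor2 g i₁ i₂ j₁ j₂) (hh : 0 < minor2 h i₁ i₂ j₁ j₂)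
    (hg' : 0 < g i₁ j₂ * g i₂ j₁) (hh' : 0 < h i₁ j₂ * h i₂ j₁) :
    0 < minor2 (fun i j => g i j * h i j) i₁ i₂ j₁ j₂ := by
  rw [minor2, sub_pos] at hg hh ⊢
  calc g i₁ j₂ * h i₁ j₂ * (g i₂ j₁ * h i₂ j₁)
      = g i₁ j₂ * g i₂ j₁ * (h i₁ j₂ * h i₂ j₁) := by ring
    _ < g i₁ j₁ * g i₂ j₂ * (h i₁ j₁ * h i₂ j₂) := mul_lt_mul'' hg hh hg'.le hh'.le
    _ = g i₁ j₁ * h i₁ j₁ * (g i₂ j₂ * h i₂ j₂) := by ring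

section Fekete

theorem pair_induction_of_adjacent {P : ℕ → ℕ → Prop} (adjacent : ∀ a, P a (a + 1))
    (split : ∀ a t b, a < t → t < b → P a t → P t b → P a b) {a b : ℕ} (hab : a < b) :
    P a b := by
  induction b, hab using Nat.le_induction with
  | base => exact adjacent a
  | succ b hab ih => exact split a b (b + 1) hab (by omega) ih (adjacent b)

theorem triple_induction_of_adjacent {P : ℕ → ℕ → ℕ → Prop}
    (adjacent : ∀ a, P a (a + 1) (a + 2))
    (split_left : ∀ a t b c, a < t → t < b → b < c → P a t b → P t b c → P a b c)
    (split_right : ∀ a b t c, a < b → b < t → t < c → P a b t → P b t c → P a b c)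
    {a b c : ℕ} (hab : a < b) (hbc : b < c) : P a b c := by
  induction hd : c - a using Nat.strong_induction_on generalizing a b c with
  | _ d ih =>
    by_cases hc : b + 1 < c
    · exact split_right a b (b + 1) c hab (by omega) hc
        (ih _ (by omega) hab (by omega) rfl) (ih _ (by omega) (by omega) hc rfl)
    by_cases ha : a + 1 < b
    · exact split_left a (a + 1) b c (by omega) ha hbc
        (ih _ (by omega) (by omega) ha rfl) (ih _ (by omega) ha hbc rfl)
    obtain ⟨rfl, rfl⟩ : b = a + 1 ∧ c = a + 2 := by omega
    exact adjacent a

variable {f : ℕ → ℕ → ℝ} {m m' : ℕ}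

theorem minor2_pos_of_adjacent_rows {j₁ j₂ : ℕ} (hf : ∀ i, i < m → 0 < f i j₂)
    (hadj : ∀ i, i + 1 < m → 0 < minor2 f i (i + 1) j₁ j₂) {a b : ℕ} (hab : a < b)
    (hb : b < m) : 0 < minor2 f a b j₁ j₂ := by
  refine pair_induction_of_adjacent (P := fun a b => b < m → 0 < minor2 f a b j₁ j₂)
    hadj (fun a t b hat htb hat' htb' hb => ?_) hab hb
  have key : minor2 f a b j₁ j₂ * f t j₂ =
      minor2 f a t j₁ j₂ * f b j₂ + minor2 f t b j₁ j₂ * f a j₂ := by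
    simp only [minor2]; ring
  refine (mul_pos_iff_of_pos_right (hf t (by omega))).1 ?_
  rw [key]
  exact add_pos (mul_pos (hat' (by omega)) (hf b hb)) (mul_pos (htb' hb) (hf a (by omega)))

theorem minor2_pos_of_adjacent (hf : ∀ i j, i < m → j < m' → 0 < f i j)
    (hadj : ∀ i j, i + 1 < m → j + 1 < m' → 0 < minor2 f i (i + 1) j (j + 1)) :
    ∀ i₁ i₂ j₁ j₂, i₁ < i₂ → i₂ < m → j₁ < j₂ → j₂ < m' → 0 < minor2 f i₁ i₂ j₁ j₂ := by
  intro i₁ i₂ j₁ j₂ hi hi₂ hj hj₂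
  have hrows : ∀ j, j + 1 < m' → 0 < minor2 f i₁ i₂ j (j + 1) := fun j hj =>
    minor2_pos_of_adjacent_rows (fun i hi => hf i (j + 1) hi hj) (fun i hi => hadj i j hi hj)
      hi hi₂
  rw [← minor2_swap]
  exact minor2_pos_of_adjacent_rows (fun j hj => hf i₂ j hi₂ hj)
    (fun j hj => (minor2_swap f _ _ _ _).symm ▸ hrows j hj) hj hj₂

theorem minor3_pos_of_adjacent_rows {j₁ j₂ j₃ : ℕ}
    (h2 : ∀ a b, a < b → b < m → 0 < minor2 f a b j₁ j₂)
    (hadj : ∀ i, i + 2 < m → 0 < minor3 f i (i + 1) (i + 2) j₁ j₂ j₃)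
    {a b c : ℕ} (hab : a < b) (hbc : b < c) (hc : c < m) : 0 < minor3 f a b c j₁ j₂ j₃ := by
  refine triple_induction_of_adjacent (P := fun a b c => c < m → 0 < minor3 f a b c j₁ j₂ j₃)
    hadj (fun a t b c hat htb hbc hP hQ hc => ?_) (fun a b t c hab hbt htc hP hQ hc => ?_)
    hab hbc hc
  · have key : minor3 f a b c j₁ j₂ j₃ * minor2 f t b j₁ j₂ =
        minor3 f t b c j₁ j₂ j₃ * minor2 f a b j₁ j₂ +
          minor3 f a t b j₁ j₂ j₃ * minor2 f b c j₁ j₂ := by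
      simp only [minor3, minor2]; ring
    refine (mul_pos_iff_of_pos_right (h2 t b htb (by omega))).1 ?_
    rw [key]
    exact add_pos (mul_pos (hQ hc) (h2 a b (by omega) (by omega)))
      (mul_pos (hP (by omega)) (h2 b c hbc hc))
  · have key : minor3 f a b c j₁ j₂ j₃ * minor2 f b t j₁ j₂ =
        minor3 f b t c j₁ j₂ j₃ * minor2 f a b j₁ j₂ +
          minor3 f a b t j₁ j₂ j₃ * minor2 f b c j₁ j₂ := by
      simp only [minor3, minor2]; ring
    refine (mul_pos_iff_of_pos_right (h2 b t hbt (by omega))).1 ?_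
    rw [key]
    exact add_pos (mul_pos (hQ hc) (h2 a b hab (by omega)))
      (mul_pos (hP (by omega)) (h2 b c (by omega) hc))

theorem minor3_pos_of_adjacent
    (h2 : ∀ i₁ i₂ j₁ j₂, i₁ < i₂ → i₂ < m → j₁ < j₂ → j₂ < m' → 0 < minor2 f i₁ i₂ j₁ j₂)
    (hadj : ∀ i j, i + 2 < m → j + 2 < m' →
      0 < minor3 f i (i + 1) (i + 2) j (j + 1) (j + 2)) :
    ∀ i₁ i₂ i₃ j₁ j₂ j₃, i₁ < i₂ → i₂ < i₃ → i₃ < m → j₁ < j₂ → j₂ < j₃ → j₃ < m' →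
      0 < minor3 f i₁ i₂ i₃ j₁ j₂ j₃ := by
  intro i₁ i₂ i₃ j₁ j₂ j₃ hi₁ hi₂ hi₃ hj₁ hj₂ hj₃
  have hrows : ∀ j, j + 2 < m' → 0 < minor3 f i₁ i₂ i₃ j (j + 1) (j + 2) := fun j hj =>
    minor3_pos_of_adjacent_rows (fun a b hab hb => h2 a b j (j + 1) hab hb (by omega) (by omega))
      (fun i hi => hadj i j hi hj) hi₁ hi₂ hi₃
  rw [← minor3_swap]
  refine minor3_pos_of_adjacent_rows (fun a b hab hb => ?_)
    (fun j hj => (minor3_swap f _ _ _ _ _ _).symm ▸ hrows j hj) hj₁ hj₂ hj₃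
  rw [minor2_swap]
  exact h2 i₁ i₂ a b hi₁ (by omega) hab hb

end Fekete

theorem isTPk_three_of_minor_pos {m m' : ℕ} {f : ℕ → ℕ → ℝ}
    (h1 : ∀ i j, i < m → j < m' → 0 < f i j)
    (h2 : ∀ i₁ i₂ j₁ j₂, i₁ < i₂ → i₂ < m → j₁ < j₂ → j₂ < m' → 0 < minor2 f i₁ i₂ j₁ j₂)
    (h3 : ∀ i₁ i₂ i₃ j₁ j₂ j₃, i₁ < i₂ → i₂ < i₃ → i₃ < m → j₁ < j₂ → j₂ < j₃ → j₃ < m' →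
      0 < minor3 f i₁ i₂ i₃ j₁ j₂ j₃) :
    IsTPk (of fun (i : Fin m) (j : Fin m') => f i j) 3 := by
  intro l hl r c hr hc
  interval_cases l
  · simp
  · simpa using h1 _ _ (r 0).2 (c 0).2
  · rw [det_fin_two]
    exact h2 _ _ _ _ (hr (by decide : (0 : Fin 2) < 1)) (r 1).2
      (hc (by decide : (0 : Fin 2) < 1)) (c 1).2
  · convert h3 _ _ _ _ _ _ (hr (by decide : (0 : Fin 3) < 1)) (hr (by decide : (1 : Fin 3) < 2))
      (r 2).2 (hc (by decide : (0 : Fin 3) < 1)) (hc (by decide : (1 : Fin 3) < 2)) (c 2).2 using 1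
    rw [det_fin_three]
    simp only [minor3, minor2, submatrix_apply, of_apply]
    ring

section DesnanotJacobi

def borderSubmatrix {ι α : Type*} (X : Matrix (Fin 2 ⊕ ι) (Fin 2 ⊕ ι) α) (a b : Fin 2) :
    Matrix (Fin 1 ⊕ ι) (Fin 1 ⊕ ι) α :=
  X.submatrix (Sum.map (fun _ => a) id) (Sum.map (fun _ => b) id)

variable {K : Type*} [Field K]

theorem det_desnanot_jacobi {ι : Type*} [Fintype ι] [DecidableEq ι]
    (X : Matrix (Fin 2 ⊕ ι) (Fin 2 ⊕ ι) K) (hS : X.toBlocks₂₂.det ≠ 0) :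
    X.det * X.toBlocks₂₂.det =
      (borderSubmatrix X 0 0).det * (borderSubmatrix X 1 1).det -
        (borderSubmatrix X 0 1).det * (borderSubmatrix X 1 0).det := by
  set S := X.toBlocks₂₂
  have : Invertible S := invertibleOfIsUnitDet S (isUnit_iff_ne_zero.2 hS)
  set T := X.toBlocks₁₁ - X.toBlocks₁₂ * ⅟S * X.toBlocks₂₁
  have hX : X.det = S.det * T.det := by
    conv_lhs => rw [← fromBlocks_toBlocks X]
    exact det_fromBlocks₂₂ _ _ _ _
  have hborder : ∀ a b, (borderSubmatrix X a b).det = S.det * T a b := by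
    intro a b
    have : borderSubmatrix X a b = fromBlocks (of fun _ _ => X (.inl a) (.inl b))
        (of fun _ q => X (.inl a) (.inr q)) (of fun p _ => X (.inr p) (.inl b)) S := by
      ext (i | i) (j | j) <;> rfl
    rw [this, det_fromBlocks₂₂, det_unique (n := Fin 1)]
    simp [T, mul_apply, toBlocks₁₁, toBlocks₁₂, toBlocks₂₁]
  rw [hX, hborder, hborder, hborder, hborder, det_fin_two]
  ring

theorem det_submatrix_mul_det_submatrix {m ι R : Type*} [Fintype m] [DecidableEq m] [Fintype ι]
    [DecidableEq ι] [CommRing R] (B C : Matrix m m R) (e e' : ι ≃ m) :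
    (B.submatrix e e').det * (C.submatrix e' e).det = B.det * C.det := by
  rw [← det_mul, submatrix_mul_equiv, det_submatrix_equiv_self, det_mul]

noncomputable def borderEquiv (s : ℕ) : Fin 2 ⊕ Fin s ≃ Fin (s + 2) :=
  Equiv.ofBijective (Sum.elim ![0, Fin.last (s + 1)] fun p => p.succ.castSucc) <| by
    refine (Fintype.bijective_iff_injective_and_card _).2 ⟨?_, by simp [add_comm]⟩
    refine Function.Injective.sumElim ?_ (Fin.castSucc_injective _ |>.comp (Fin.succ_injective _))
      ?_
    · intro a b h
      fin_cases a <;> fin_cases b <;> simp_all [Fin.ext_iff]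
    · intro a p
      fin_cases a
      · exact (Fin.castSucc_ne_zero_iff.2 p.succ_ne_zero).symm
      · exact (Fin.castSucc_lt_last _).ne'

noncomputable def cornerEquiv (s : ℕ) : Fin 2 → (Fin 1 ⊕ Fin s ≃ Fin (s + 1)) :=
  ![Equiv.ofBijective (Sum.elim (fun _ => 0) Fin.succ) <|
      (Fintype.bijective_iff_injective_and_card _).2 ⟨Function.injective_of_subsingleton _
        |>.sumElim (Fin.succ_injective _) fun _ p => (Fin.succ_ne_zero p).symm, by simp [add_comm]⟩,
    Equiv.ofBijective (Sum.elim (fun _ => Fin.last s) Fin.castSucc) <|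
      (Fintype.bijective_iff_injective_and_card _).2 ⟨Function.injective_of_subsingleton _
        |>.sumElim (Fin.castSucc_injective _) fun _ p => (Fin.castSucc_lt_last p).ne',
        by simp [add_comm]⟩]

theorem borderEquiv_inr (s : ℕ) (p : Fin s) : (borderEquiv s (.inr p) : ℕ) = p + 1 := rfl

theorem borderEquiv_sumMap (s : ℕ) (α : Fin 2) (u : Fin 1 ⊕ Fin s) :
    (borderEquiv s (Sum.map (fun _ => α) id u) : ℕ) = α + cornerEquiv s α u := by
  fin_cases α <;> rcases u with _ | p <;> simp [borderEquiv, cornerEquiv] <;> omega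

def contigMinor {R : Type*} [CommRing R] (A : ℕ → ℕ → R) (s a b : ℕ) : R :=
  (of fun p q : Fin s => A (a + p) (b + q)).det

theorem contigMinor_desnanot_jacobi (A : ℕ → ℕ → K) (s a b : ℕ)
    (h : contigMinor A s (a + 1) (b + 1) ≠ 0) :
    contigMinor A (s + 2) a b * contigMinor A s (a + 1) (b + 1) =
      minor2 (contigMinor A (s + 1)) a (a + 1) b (b + 1) := by
  set X : Matrix (Fin 2 ⊕ Fin s) (Fin 2 ⊕ Fin s) K :=
    of fun u v => A (a + borderEquiv s u) (b + borderEquiv s v)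
  have hX : contigMinor A (s + 2) a b = X.det := (det_submatrix_equiv_self (borderEquiv s) _).symm
  have hS : contigMinor A s (a + 1) (b + 1) = X.toBlocks₂₂.det := by
    unfold contigMinor
    congr 1
    ext p q
    simp only [of_apply, toBlocks₂₂, X, borderEquiv_inr]
    congr 1 <;> omega
  have hborder : ∀ α β : Fin 2, borderSubmatrix X α β =
      (of fun p q : Fin (s + 1) => A (a + α + p) (b + β + q)).submatrix
        (cornerEquiv s α) (cornerEquiv s β) := by
    intro α β
    ext u v
    simp only [borderSubmatrix, submatrix_apply, of_apply, X, borderEquiv_sumMap, add_assoc]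
  rw [hX, hS, det_desnanot_jacobi X (hS ▸ h), hborder, hborder, hborder, hborder,
    det_submatrix_equiv_self, det_submatrix_equiv_self, det_submatrix_mul_det_submatrix]
  simp [minor2, contigMinor]

end DesnanotJacobi

section Condensation

def ContiguousMinorsPos (A : ℕ → ℕ → ℝ) (m m' r : ℕ) : Prop :=
  ∀ t a b, t ≤ r → a + t ≤ m → b + t ≤ m' → 0 < contigMinor A t a b

variable {A : ℕ → ℕ → ℝ} {m m' r s i j : ℕ}

theorem ContiguousMinorsPos.adjacent_minor2_pos (h : ContiguousMinorsPos A m m' r)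
    (hs : s + 2 ≤ r) (hi : i + (s + 2) ≤ m) (hj : j + (s + 2) ≤ m') :
    0 < minor2 (contigMinor A (s + 1)) i (i + 1) j (j + 1) := by
  rw [← contigMinor_desnanot_jacobi A s i j (h s _ _ (by omega) (by omega) (by omega)).ne']
  exact mul_pos (h _ _ _ hs hi hj) (h _ _ _ (by omega) (by omega) (by omega))

theorem ContiguousMinorsPos.adjacent_minor3_pos (h : ContiguousMinorsPos A m m' r)
    (hs : s + 4 ≤ r) (hi : i + (s + 4) ≤ m) (hj : j + (s + 4) ≤ m') :
    0 < minor3 (contigMinor A (s + 2)) i (i + 1) (i + 2) j (j + 1) (j + 2) := by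
  set g := contigMinor A (s + 3)
  set g' := fun x y => contigMinor A (s + 1) (x + 1) (y + 1)
  have hDJ : ∀ x y, x ≤ i + 1 → y ≤ j + 1 →
      minor2 (contigMinor A (s + 2)) x (x + 1) y (y + 1) = g x y * g' x y := fun x y hx hy =>
    (contigMinor_desnanot_jacobi A (s + 1) x y (h _ _ _ (by omega) (by omega) (by omega)).ne').symm
  have key : minor3 (contigMinor A (s + 2)) i (i + 1) (i + 2) j (j + 1) (j + 2) *
      contigMinor A (s + 2) (i + 1) (j + 1) =
        minor2 (fun x y => g x y * g' x y) i (i + 1) j (j + 1) := by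
    rw [minor3_desnanot_jacobi, hDJ i j le_self_add le_self_add,
      hDJ (i + 1) (j + 1) le_rfl le_rfl, hDJ i (j + 1) le_self_add le_rfl,
      hDJ (i + 1) j le_rfl le_self_add]
    rfl
  refine (mul_pos_iff_of_pos_right (h (s + 2) (i + 1) (j + 1) (by omega) (by omega)
    (by omega))).1 ?_
  rw [key]
  refine minor2_mul_pos (h.adjacent_minor2_pos (s := s + 2) hs hi hj)
    (h.adjacent_minor2_pos (s := s) (i := i + 1) (j := j + 1) (by omega) (by omega) (by omega))
    (mul_pos ?_ ?_) (mul_pos ?_ ?_) <;> exact h _ _ _ (by omega) (by omega) (by omega)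

end Condensation

noncomputable def extendByZero {n : ℕ} (A : Matrix (Fin n) (Fin n) ℝ) : ℕ → ℕ → ℝ :=
  fun i j => if h : i < n ∧ j < n then A ⟨i, h.1⟩ ⟨j, h.2⟩ else 0

theorem contigMinor_extendByZero {n : ℕ} (A : Matrix (Fin n) (Fin n) ℝ) {s a b : ℕ}
    (ha : a + s ≤ n) (hb : b + s ≤ n) :
    contigMinor (extendByZero A) s a b = cminor A s a b ha hb := by
  unfold contigMinor cminor
  congr 1
  ext p q
  simp [extendByZero, show a + p < n by omega, show b + q < n by omega]

theorem IsTPk.contiguousMinorsPos {n r : ℕ} {A : Matrix (Fin n) (Fin n) ℝ} (hA : IsTPk A r) :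
    ContiguousMinorsPos (extendByZero A) n n r := by
  intro t a b ht ha hb
  rw [contigMinor_extendByZero A ha hb]
  exact hA t ht _ _ (fun p q h => Fin.mk_lt_mk.2 (by simpa using h))
    (fun p q h => Fin.mk_lt_mk.2 (by simpa using h))

theorem Dmat_eq_contigMinor {n : ℕ} (A : Matrix (Fin n) (Fin n) ℝ) (k : ℕ) :
    Dmat A k = of fun i j : Fin (n - k) => contigMinor (extendByZero A) (k + 1) i j := by
  ext i j
  rw [of_apply, contigMinor_extendByZero A (by omega) (by omega)]
  rfl

/-- **Theorem B(2).** If `A` is `TP_{k+3}` for some `k ≥ 1`, then `D_k(A)` is `TP₃`. -/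
theorem Dmat_TP3 {n k : ℕ} (hk : 1 ≤ k) (A : Matrix (Fin n) (Fin n) ℝ)
    (hA : IsTPk A (k + 3)) : IsTPk (Dmat A k) 3 := by
  obtain ⟨s, rfl⟩ : ∃ s, k = s + 1 := ⟨k - 1, by omega⟩
  have hpos := hA.contiguousMinorsPos
  have h1 : ∀ i j, i < n - (s + 1) → j < n - (s + 1) →
      0 < contigMinor (extendByZero A) (s + 1 + 1) i j :=
    fun i j hi hj => hpos _ _ _ (by omega) (by omega) (by omega)
  have h2 := minor2_pos_of_adjacent h1
    fun i j hi hj => hpos.adjacent_minor2_pos (by omega) (by omega) (by omega)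
  have h3 := minor3_pos_of_adjacent h2
    fun i j hi hj => hpos.adjacent_minor3_pos (by omega) (by omega) (by omega)
  rw [Dmat_eq_contigMinor]
  exact isTPk_three_of_minor_pos h1 h2 h3
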